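/- arXiv:2302.09837 — 2 statements merged into one kernel-verified Lean document; each statement's English description precedes it below -/
import Mathlib

section
/- Let k ≥ 1 be an odd natural number and set n = 2k+1 (so n ≡ 3 mod 4). Then 2·∏_{j ∈ {1,3,5,…,k}} j·(n−j), where the product runs over odd j with 1 ≤ j ≤ k, is a perfect square. (For example, for k=1: 2·(1·2) = 4; for k=3: 2·(1·6)·(3·4) = 144.) -/
/-!
Write `k = 2t + 1`. The odd `j ≤ k` are `2i + 1` with `i ≤ t`, and then `n - j = 2(k - i)`, so the
product is `(2t+1)‼ · 2^(t+1) · k(k-1)⋯(k-t)`. The falling factorial is `(2t+1)! / t! = 2^t (2t+1)‼`,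
so twice the product is `(2^(t+1) (2t+1)‼)^2`.
-/

open Finset Nat

theorem prod_filter_odd_range_two_mul_add_two {M : Type*} [CommMonoid M] (t : ℕ) (f : ℕ → M) :
    ∏ j ∈ (range (2 * t + 2)).filter Odd, f j = ∏ i ∈ range (t + 1), f (2 * i + 1) := by
  have hodd : (range (2 * t + 2)).filter Odd = (range (t + 1)).image (fun i => 2 * i + 1) := by
    ext j
    simp only [mem_filter, mem_range, mem_image, Nat.odd_iff]
    constructor
    · rintro ⟨hj, hjodd⟩
      exact ⟨j / 2, by omega, by omega⟩
    · rintro ⟨i, hi, rfl⟩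
      omega
  rw [hodd, prod_image fun a _ b _ hab => by omega]

theorem prod_range_two_mul_add_one (t : ℕ) : ∏ i ∈ range (t + 1), (2 * i + 1) = (2 * t + 1)‼ := by
  rw [prod_range_succ', doubleFactorial_eq_prod_odd]
  simp

theorem descFactorial_two_mul_add_one (t : ℕ) :
    (2 * t + 1).descFactorial (t + 1) = 2 ^ t * (2 * t + 1)‼ := by
  have h := factorial_mul_descFactorial (show t + 1 ≤ 2 * t + 1 by omega)
  rw [show 2 * t + 1 - (t + 1) = t by omega, factorial_eq_mul_doubleFactorial,
    doubleFactorial_two_mul] at h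
  apply Nat.eq_of_mul_eq_mul_left (factorial_pos t)
  rw [h]
  ring

theorem two_mul_prod_odd_j_mul_n_sub_j_sq_general (k : ℕ) (hko : Odd k) :
    ∃ m : ℕ, 2 * ∏ j ∈ (Finset.range (k + 1)).filter (fun j => Odd j),
      j * ((2 * k + 1) - j) = m ^ 2 := by
  obtain ⟨t, rfl⟩ := hko
  have hcomplement : ∀ i ∈ range (t + 1),
      (2 * i + 1) * (2 * (2 * t + 1) + 1 - (2 * i + 1)) = (2 * i + 1) * (2 * (2 * t + 1 - i)) :=
    fun i hi => by rw [mem_range] at hi; congr 1; omega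
  have heven : ∏ i ∈ range (t + 1), 2 * (2 * t + 1 - i) = 2 ^ (t + 1) * (2 ^ t * (2 * t + 1)‼) := by
    rw [prod_mul_distrib, prod_const, card_range, ← descFactorial_eq_prod_range,
      descFactorial_two_mul_add_one]
  refine ⟨2 ^ (t + 1) * (2 * t + 1)‼, ?_⟩
  rw [prod_filter_odd_range_two_mul_add_two, prod_congr rfl hcomplement, prod_mul_distrib,
    prod_range_two_mul_add_one, heven]
  ring

/-- For odd k ≥ 1 and n = 2k+1, twice the product of j(n−j) over odd j with
1 ≤ j ≤ k is a perfect square. -/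
theorem two_mul_prod_odd_j_mul_n_sub_j_sq (k : ℕ) (hk : 1 ≤ k) (hko : Odd k) :
    ∃ m : ℕ, 2 * ∏ j ∈ (Finset.range (k + 1)).filter (fun j => Odd j),
      j * ((2 * k + 1) - j) = m ^ 2 :=
  two_mul_prod_odd_j_mul_n_sub_j_sq_general k hko
end

section
/- Let F be a field and, using the quaternion conjugation on M₂(F) given by conj(A) = adj(A) (the adjugate), define a (non-associative) F-algebra structure on O = M₂(F) × M₂(F) by (A₁,B₁)·(A₂,B₂) = (A₁A₂ − conj(B₂)B₁, B₂A₁ + B₁conj(A₂)). For a ∈ F let X = [[a,1],[−1,0]] and define φ_a : O → O by φ_a(A,B) = (A, X·B). Then φ_a is an F-algebra automorphism of O (it is F-linear, bijective, and multiplicative). -/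
open Matrix

/-- Split octonion multiplication on M₂(F) × M₂(F), where conjugation on the
quaternion algebra M₂(F) is the adjugate. -/
def octMul {F : Type*} [Field F]
    (p q : Matrix (Fin 2) (Fin 2) F × Matrix (Fin 2) (Fin 2) F) :
    Matrix (Fin 2) (Fin 2) F × Matrix (Fin 2) (Fin 2) F :=
  (p.1 * q.1 - (q.2).adjugate * p.2, q.2 * p.1 + p.2 * (q.1).adjugate)

/-- For X = [[a,1],[−1,0]], the map (A,B) ↦ (A, X·B) is an F-algebra
automorphism of the split octonions: F-linear, bijective and multiplicative. -/
theorem octonion_automorphism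
    (F : Type*) [Field F] (a : F)
    (X : Matrix (Fin 2) (Fin 2) F) (hX : X = !![a, 1; -1, 0])
    (φ : Matrix (Fin 2) (Fin 2) F × Matrix (Fin 2) (Fin 2) F →
         Matrix (Fin 2) (Fin 2) F × Matrix (Fin 2) (Fin 2) F)
    (hφ : ∀ p, φ p = (p.1, X * p.2)) :
    Function.Bijective φ ∧
    (∀ p q, φ (p + q) = φ p + φ q) ∧
    (∀ (c : F) p, φ (c • p) = c • φ p) ∧
    (∀ p q, φ (octMul p q) = octMul (φ p) (φ q)) := by
  have hdet : X.det = 1 := by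
    subst hX
    simp [Matrix.det_fin_two_of]
  have hadj : X.adjugate * X = 1 := by
    rw [Matrix.adjugate_mul, hdet, one_smul]
  refine ⟨⟨?_, ?_⟩, ?_, ?_, ?_⟩
  · intro p q h
    rw [hφ, hφ] at h
    have h1 : p.1 = q.1 := (Prod.mk.injEq _ _ _ _ ▸ h).1
    have h2 : X * p.2 = X * q.2 := (Prod.mk.injEq _ _ _ _ ▸ h).2
    have h2' : p.2 = q.2 := by
      have := congrArg (fun M => X.adjugate * M) h2
      simpa [← mul_assoc, hadj] using this
    exact Prod.ext h1 h2'
  · intro p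
    refine ⟨(p.1, X.adjugate * p.2), ?_⟩
    rw [hφ]
    simp [← mul_assoc]
    rw [Matrix.mul_adjugate, hdet, one_smul, one_mul]
  · intro p q
    simp [hφ, mul_add, Prod.ext_iff]
  · intro c p
    simp [hφ, Matrix.mul_smul, Prod.ext_iff]
  · intro p q
    rw [hφ, hφ, hφ]
    simp only [octMul, Prod.mk.injEq]
    constructor
    · congr 1
      rw [Matrix.adjugate_mul_distrib, mul_assoc, ← mul_assoc X.adjugate, hadj, one_mul]
    · rw [mul_add, mul_assoc, mul_assoc]
end
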